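/- Identity compilation does not preserve robust satisfaction of noninterference (second part of Lemma 3): In the WHILE-like languages Source and Target, assume there is at least one high variable v. Then there exists a program P (namely P = (v := 42)) such that P robustly satisfies noninterference NI in Source — i.e., beh([P]) ∈ NI for the unique Source context — yet, regarding P as a Target program via the identity compiler, beh(⌈P⌉) ∉ NI, so P does not robustly satisfy NI in Target. -/
import Mathlib


/-! ## States, expressions, programs -/

/-- States assign a natural number to every variable. -/
abbrev St (Var : Type) := Var → ℕ

/-- Arithmetic expressions. -/
inductive Expr (Var : Type) where
  | num (n : ℕ)
  | var (v : Var)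
  | add (e1 e2 : Expr Var)
  | mul (e1 e2 : Expr Var)

/-- Evaluation of an expression in a state. -/
def Expr.eval {Var : Type} (s : St Var) : Expr Var → ℕ
  | .num n => n
  | .var v => s v
  | .add e1 e2 => e1.eval s + e2.eval s
  | .mul e1 e2 => e1.eval s * e2.eval s

/-- The set of variables occurring in an expression. -/
def Expr.vars {Var : Type} : Expr Var → Set Var
  | .num _ => ∅
  | .var v => {v}
  | .add e1 e2 => e1.vars ∪ e2.vars
  | .mul e1 e2 => e1.vars ∪ e2.vars

/-- State update. -/
def upd {Var : Type} [DecidableEq Var] (s : St Var) (v : Var) (n : ℕ) : St Var :=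
  fun x => if x = v then n else s x

/-- WHILE programs, common to Source and Target. -/
inductive Prog (Var : Type) where
  | skip
  | assign (v : Var) (e : Expr Var)
  | seq (p q : Prog Var)
  | whileE (e : Expr Var) (p : Prog Var)

/-- Step labels: the internal label `H` and the observable label `!` (bang). -/
inductive Lab where
  | h
  | bang
deriving DecidableEq

/-- The labeled small-step semantics of programs.  A step
`PStep isHigh s p l s' r` goes from configuration `(s, p)` to state `s'`,
emitting the optional label `l`; `r = none` means the program terminates (✓)
and `r = some p'` means control continues with `p'`. -/
inductive PStep {Var : Type} [DecidableEq Var] (isHigh : Var → Prop) :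
    St Var → Prog Var → Option Lab → St Var → Option (Prog Var) → Prop where
  | skip {s} :
      PStep isHigh s .skip none s none
  | asnH {s v e} : isHigh v → s v ≠ Expr.eval s e →
      PStep isHigh s (.assign v e) (some .h) (upd s v (Expr.eval s e)) none
  | asnHeq {s v e} : isHigh v → s v = Expr.eval s e →
      PStep isHigh s (.assign v e) none s none
  | asnL {s v e} : ¬ isHigh v → (∀ x ∈ Expr.vars e, ¬ isHigh x) →
      PStep isHigh s (.assign v e) none (upd s v (Expr.eval s e)) none
  | seq1 {s p q l s'} : PStep isHigh s p l s' none →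
      PStep isHigh s (.seq p q) l s' (some q)
  | seq2 {s p q l s' p'} : PStep isHigh s p l s' (some p') →
      PStep isHigh s (.seq p q) l s' (some (.seq p' q))
  | while0 {s e p} : Expr.eval s e = 0 →
      PStep isHigh s (.whileE e p) none s (some .skip)
  | while1 {s e p} : Expr.eval s e ≠ 0 →
      PStep isHigh s (.whileE e p) none s (some (.seq p (.whileE e p)))

/-! ## Traces and behaviors -/

/-- An abstract trace: the initial state followed by, for each step, the
(optional) emitted label and the resulting state.  A finite trace implicitly
ends with the termination marker ✓; an infinite trace records infinitely many
steps. -/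
inductive Trace (Var : Type) where
  | fin (s0 : St Var) (steps : List (Option Lab × St Var))
  | inf (s0 : St Var) (steps : Stream' (Option Lab × St Var))

/-- A finite, terminating run of term `p` from state `s`, producing the given
list of steps (the last step terminates with ✓). -/
inductive FinRun {Var Tm : Type}
    (Step : St Var → Tm → Option Lab → St Var → Option Tm → Prop) :
    St Var → Tm → List (Option Lab × St Var) → Prop where
  | last {s p l s'} : Step s p l s' none →
      FinRun Step s p [(l, s')]
  | cons {s p l s' p' tr} : Step s p l s' (some p') → FinRun Step s' p' tr →
      FinRun Step s p ((l, s') :: tr)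

/-- An infinite run of term `p` from state `s0`, producing the given stream of steps. -/
def InfRun {Var Tm : Type}
    (Step : St Var → Tm → Option Lab → St Var → Option Tm → Prop)
    (s0 : St Var) (p : Tm) (steps : Stream' (Option Lab × St Var)) : Prop :=
  ∃ ps : Stream' Tm, ps 0 = p ∧
    ∀ n, Step (match n with | 0 => s0 | Nat.succ m => (steps m).2)
      (ps n) (steps n).1 (steps n).2 (some (ps (n + 1)))

/-- The behavior of a term: the set of all its abstract traces, from every
initial state. -/
def beh {Var Tm : Type}
    (Step : St Var → Tm → Option Lab → St Var → Option Tm → Prop) (p : Tm) :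
    Set (Trace Var) :=
  { t | (∃ s0 steps, t = Trace.fin s0 steps ∧ FinRun Step s0 p steps) ∨
        (∃ s0 steps, t = Trace.inf s0 steps ∧ InfRun Step s0 p steps) }

/-! ## Observable events, low-equivalence and noninterference -/

/-- Observable events: states, `!` and ✓ (the label `H` is internal). -/
inductive ObsEv (Var : Type) where
  | state (s : St Var)
  | bang
  | tick

/-- The observable events contributed by one step: the internal label `H` is
erased, `!` is kept, and the resulting state is recorded. -/
def stepObs {Var : Type} : Option Lab × St Var → List (ObsEv Var)
  | (some .bang, s) => [.bang, .state s]
  | (_, s) => [.state s]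

/-- The sequence of observable events of a trace (internal `H` events erased),
as a partial function on positions. -/
def Trace.obs {Var : Type} : Trace Var → ℕ → Option (ObsEv Var)
  | .fin s0 steps => fun n =>
      (ObsEv.state s0 :: (steps.flatMap stepObs ++ [ObsEv.tick]))[n]?
  | .inf s0 steps => fun n =>
      (ObsEv.state s0 :: (List.range (n + 1)).flatMap (fun i => stepObs (steps i)))[n]?

/-- The initial state of a trace. -/
def Trace.init {Var : Type} : Trace Var → St Var
  | .fin s0 _ => s0
  | .inf s0 _ => s0

/-- Low-equivalence of states: agreement on every low variable. -/
def stLowEq {Var : Type} (isHigh : Var → Prop) (s1 s2 : St Var) : Prop :=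
  ∀ v, ¬ isHigh v → s1 v = s2 v

/-- Low-equivalence of observable events. -/
def evLowEq {Var : Type} (isHigh : Var → Prop) : ObsEv Var → ObsEv Var → Prop
  | .state s1, .state s2 => stLowEq isHigh s1 s2
  | .bang, .bang => True
  | .tick, .tick => True
  | _, _ => False

/-- Low-equivalence lifted to optional observable events (positions beyond the
end of both traces match). -/
def oLowEq {Var : Type} (isHigh : Var → Prop) :
    Option (ObsEv Var) → Option (ObsEv Var) → Prop
  | some a, some b => evLowEq isHigh a b
  | none, none => True
  | _, _ => False

/-- Low-equivalence of traces: pointwise low-equivalence of their sequences of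
observable events. -/
def traceLowEq {Var : Type} (isHigh : Var → Prop) (t1 t2 : Trace Var) : Prop :=
  ∀ n, oLowEq isHigh (t1.obs n) (t2.obs n)

/-- Noninterference as a hyperproperty. -/
def NI {Var : Type} (isHigh : Var → Prop) : Set (Set (Trace Var)) :=
  { π | ∀ t1 ∈ π, ∀ t2 ∈ π,
      stLowEq isHigh t1.init t2.init → traceLowEq isHigh t1 t2 }

/-! ## The Target language: contexts -/

/-- Whole Target terms: a program plugged either into the identity hole or
into the context `⌈·⌉`. -/
inductive TTm (Var : Type) where
  | plain (p : Prog Var)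
  | banged (p : Prog Var)

/-- The context `⌈·⌉` re-labels the internal label `H` to the observable `!`. -/
def relabel : Option Lab → Option Lab
  | some .h => some .bang
  | l => l

/-- The semantics of whole Target terms: `⌈p⌉` steps exactly as `p` except that
every step labeled `H` is re-labeled to `!`. -/
inductive TStep {Var : Type} [DecidableEq Var] (isHigh : Var → Prop) :
    St Var → TTm Var → Option Lab → St Var → Option (TTm Var) → Prop where
  | plain {s p l s' r} : PStep isHigh s p l s' r →
      TStep isHigh s (.plain p) l s' (r.map TTm.plain)
  | banged {s p l s' r} : PStep isHigh s p l s' r →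
      TStep isHigh s (.banged p) (relabel l) s' (r.map TTm.banged)

/-- Target contexts: the identity hole and `⌈·⌉`. -/
inductive CtxT where
  | hole
  | bang

/-- Plugging a program into a Target context. -/
def plugT {Var : Type} : CtxT → Prog Var → TTm Var
  | .hole, p => .plain p
  | .bang, p => .banged p

/-- Characterization of traces of an assignment in Source. -/
lemma mem_beh_assign {Var : Type} [DecidableEq Var] (isHigh : Var → Prop)
    (v : Var) (e : Expr Var) (t : Trace Var)
    (ht : t ∈ beh (PStep isHigh) (Prog.assign v e)) :
    ∃ s0 l s', t = Trace.fin s0 [(l, s')] ∧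
      stepObs (l, s') = [ObsEv.state s'] ∧ (∀ x, x ≠ v → s' x = s0 x) := by
  rcases ht with ⟨s0, steps, rfl, hrun⟩ | ⟨s0, steps, rfl, ps, hps0, hstep⟩
  · cases hrun with
    | last h =>
      cases h with
      | asnH hH hne =>
        exact ⟨s0, some .h, _, rfl, rfl, fun x hx => by simp [upd, hx]⟩
      | asnHeq hH heq =>
        exact ⟨s0, none, s0, rfl, rfl, fun x hx => rfl⟩
      | asnL hL hvars =>
        exact ⟨s0, none, _, rfl, rfl, fun x hx => by simp [upd, hx]⟩
    | cons h _ => cases h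
  · have := hstep 0
    rw [hps0] at this
    generalize (steps 0).1 = l at this
    generalize (steps 0).2 = s' at this
    cases this

/-- Second part of Lemma 3: the identity compiler does not preserve robust
satisfaction of noninterference.  Assuming there is a high variable `v`, the
program `P = (v := 42)` robustly satisfies `NI` in Source (whose only context
is the identity), but, seen as a Target program, `beh(⌈P⌉) ∉ NI`, so `P` does
not robustly satisfy `NI` in Target. -/

theorem identity_compiler_not_robust_NI
    {Var : Type} [DecidableEq Var] (isHigh : Var → Prop) (v : Var) (hv : isHigh v) :
    ∃ P : Prog Var, P = Prog.assign v (Expr.num 42) ∧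
      beh (PStep isHigh) P ∈ NI isHigh ∧
      beh (TStep isHigh) (TTm.banged P) ∉ NI isHigh := by
  refine ⟨Prog.assign v (Expr.num 42), rfl, ?_, ?_⟩
  · intro t1 h1 t2 h2 hlow
    obtain ⟨s1, l1, s1', rfl, ho1, hs1⟩ := mem_beh_assign isHigh v _ t1 h1
    obtain ⟨s2, l2, s2', rfl, ho2, hs2⟩ := mem_beh_assign isHigh v _ t2 h2
    have hlow' : stLowEq isHigh s1' s2' := by
      intro x hx
      have hxv : x ≠ v := fun h => hx (h ▸ hv)
      rw [hs1 x hxv, hs2 x hxv]; exact hlow x hx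
    intro n
    simp only [Trace.obs, List.flatMap_cons, List.flatMap_nil, ho1, ho2, List.append_nil]
    match n with
    | 0 => exact hlow
    | 1 => exact hlow'
    | 2 => trivial
    | (n+3) => simp [oLowEq]
  · intro hNI
    set s1 : St Var := fun _ => 42 with hs1def
    set s2 : St Var := upd s1 v 0 with hs2def
    have hmem1 : Trace.fin s1 [(none, s1)] ∈ beh (TStep isHigh) (TTm.banged (Prog.assign v (Expr.num 42))) := by
      left
      refine ⟨s1, _, rfl, FinRun.last ?_⟩
      have h := TStep.banged (isHigh := isHigh) (PStep.asnHeq (s := s1) (e := Expr.num 42) hv rfl)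
      exact h
    have hmem2 : Trace.fin s2 [(some .bang, upd s2 v 42)] ∈ beh (TStep isHigh) (TTm.banged (Prog.assign v (Expr.num 42))) := by
      left
      refine ⟨s2, _, rfl, FinRun.last ?_⟩
      have h := TStep.banged (isHigh := isHigh) (PStep.asnH (s := s2) (e := Expr.num 42) hv (by simp [hs2def, upd, Expr.eval]))
      exact h
    have hlow : stLowEq isHigh s1 s2 := by
      intro x hx
      have hxv : x ≠ v := fun h => hx (h ▸ hv)
      simp [hs2def, upd, hxv]
    have := hNI _ hmem1 _ hmem2 hlow 1
    simp [Trace.obs, stepObs, oLowEq, evLowEq] at this
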